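/- arXiv:2206.07883 — 9 statements merged into one kernel-verified Lean document; each statement's English description precedes it below -/
import Mathlib

section
/- m_{ε,Δ} ≤ 2m. That is, the gap-dependent observation threshold is at most twice the observation threshold. -/
open Finset

open scoped Classical in
private lemma aux_ncard_setOf {α : Type*} [Fintype α] (P : α → Prop) :
    {a | P a}.ncard = (univ.filter P).card := by
  rw [Set.ncard_eq_toFinset_card']
  simp [Set.toFinset_setOf]

open scoped Classical in
private lemma aux_filter_comp_card {α β : Type*} [Fintype α] [Fintype β]
    (e : α → β) (he : Function.Bijective e) (P : β → Prop) :
    (univ.filter fun a => P (e a)).card = (univ.filter P).card := by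
  rw [← Finset.card_image_of_injective (univ.filter fun a => P (e a)) he.1]
  congr 1
  ext b
  simp only [Finset.mem_image, Finset.mem_filter, Finset.mem_univ, true_and]
  constructor
  · rintro ⟨a, ha, rfl⟩; exact ha
  · intro hb; obtain ⟨a, rfl⟩ := he.2 b; exact ⟨a, hb, rfl⟩

/-- Lemma 1 of the paper: the gap-dependent observation threshold `m_{ε,Δ}`
is at most twice the observation threshold `m`. -/
theorem gap_dependent_observation_threshold_le_two_mul_observation_threshold
    {α : Type*} [Fintype α] [Nonempty α]
    (K : ℕ) (hK : Fintype.card α = K)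
    (q Δ : α → ℝ) (ε : ℝ)
    (hq0 : ∀ a, 0 ≤ q a) (hq1 : ∀ a, q a ≤ 1)
    (hΔ0 : ∀ a, 0 ≤ Δ a) (hε : 0 ≤ ε)
    (w : α → ℝ) (hw : ∀ a, w a = max (Δ a) (ε / 2))
    (hwpos : ∀ a, 0 < w a)
    (e : Fin K → α) (he : Function.Bijective e)
    (hsorted : ∀ i j : Fin K, i ≤ j →
      q (e i) * w (e i) ^ 2 ≤ q (e j) * w (e j) ^ 2)
    (H : ℕ → ℝ)
    (hH : ∀ r, H r = ∑ i ∈ univ.filter (fun i : Fin K => (i : ℕ) < r),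
      1 / w (e i) ^ 2)
    (m mgap : ℕ)
    (hm : m = sInf {τ : ℕ | 1 ≤ τ ∧ τ ≤ K ∧
      {a : α | q a < 1 / (τ : ℝ)}.ncard ≤ τ})
    (hmgap : mgap = sInf {τ : ℕ | 1 ≤ τ ∧ τ ≤ K ∧
      {a : α | q a * w a ^ 2 < 1 / H τ}.ncard ≤ τ}) :
    mgap ≤ 2 * m := by
  classical
  have hK1 : 1 ≤ K := by rw [← hK]; exact Fintype.card_pos
  have hncard_le : ∀ P : α → Prop, {a : α | P a}.ncard ≤ K := by
    intro P
    have h := Set.ncard_le_ncard (Set.subset_univ {a : α | P a}) Set.finite_univ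
    rwa [Set.ncard_univ, Nat.card_eq_fintype_card, hK] at h
  -- K belongs to both defining sets
  have hKm : K ∈ {τ : ℕ | 1 ≤ τ ∧ τ ≤ K ∧
      {a : α | q a < 1 / (τ : ℝ)}.ncard ≤ τ} := ⟨hK1, le_refl K, hncard_le _⟩
  have hKg : K ∈ {τ : ℕ | 1 ≤ τ ∧ τ ≤ K ∧
      {a : α | q a * w a ^ 2 < 1 / H τ}.ncard ≤ τ} := ⟨hK1, le_refl K, hncard_le _⟩
  have hmmem : m ∈ {τ : ℕ | 1 ≤ τ ∧ τ ≤ K ∧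
      {a : α | q a < 1 / (τ : ℝ)}.ncard ≤ τ} := by
    rw [hm]; exact Nat.sInf_mem ⟨K, hKm⟩
  obtain ⟨hm1, hmK, hmcard⟩ := hmmem
  by_cases hcase : K ≤ 2 * m
  · rw [hmgap]
    exact le_trans (Nat.sInf_le hKg) hcase
  push_neg at hcase
  have h2m : 2 * m ≤ K := le_of_lt hcase
  -- translate hmcard to Fin K
  have hBcard : (univ.filter fun i : Fin K => q (e i) < 1 / (m : ℝ)).card ≤ m := by
    rw [aux_ncard_setOf (fun a : α => q a < 1 / (m : ℝ))] at hmcard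
    have h1 := aux_filter_comp_card e he (fun a : α => q a < 1 / (m : ℝ))
    calc (univ.filter fun i : Fin K => q (e i) < 1 / (m : ℝ)).card
        = (univ.filter fun a : α => q a < 1 / (m : ℝ)).card := by
          convert h1 using 2
      _ ≤ m := by convert hmcard using 2
  set B : Finset (Fin K) := univ.filter fun i : Fin K => q (e i) < 1 / (m : ℝ) with hB
  set A : Finset (Fin K) := univ.filter fun i : Fin K => (i : ℕ) < 2 * m with hA
  have hAcard : A.card = 2 * m := by
    have hAeq : A = Finset.Iio (⟨2 * m, hcase⟩ : Fin K) := by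
      ext i
      simp [hA, Finset.mem_Iio, Fin.lt_def]
    rw [hAeq, Fin.card_Iio]
  have hmpos : (0 : ℝ) < m := by exact_mod_cast hm1
  -- main bound: the gap set at τ = 2m has small ncard
  have hmain : {a : α | q a * w a ^ 2 < 1 / H (2 * m)}.ncard ≤ 2 * m := by
    have hsub : {a : α | q a * w a ^ 2 < 1 / H (2 * m)} ⊆
        e '' {i : Fin K | (i : ℕ) < 2 * m} := by
      intro a ha
      obtain ⟨j, rfl⟩ := he.2 a
      by_contra hj
      have hjge : 2 * m ≤ (j : ℕ) := by
        by_contra hlt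
        push_neg at hlt
        exact hj ⟨j, hlt, rfl⟩
      set c : ℝ := q (e j) * w (e j) ^ 2 with hc
      have hc0 : 0 ≤ c := mul_nonneg (hq0 _) (sq_nonneg _)
      have hle_c : ∀ i : Fin K, (i : ℕ) < 2 * m → q (e i) * w (e i) ^ 2 ≤ c := by
        intro i hi
        exact hsorted i j (Fin.le_def.2 (le_trans (le_of_lt hi) hjge))
      have hcpos : 0 < c := by
        rcases hc0.lt_or_eq with h | h
        · exact h
        exfalso
        have hAB : A ⊆ B := by
          intro i hi
          rw [hA, Finset.mem_filter] at hi
          have h1 : q (e i) * w (e i) ^ 2 ≤ 0 := h ▸ hle_c i hi.2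
          have h2 : 0 ≤ q (e i) * w (e i) ^ 2 := mul_nonneg (hq0 _) (sq_nonneg _)
          have hq : q (e i) = 0 := by
            have hw2 : 0 < w (e i) ^ 2 := pow_pos (hwpos _) 2
            nlinarith [le_antisymm h1 h2]
          rw [hB, Finset.mem_filter]
          refine ⟨Finset.mem_univ _, ?_⟩
          rw [hq]
          positivity
        have := Finset.card_le_card hAB
        rw [hAcard] at this
        omega
      -- lower bound on H (2m)
      have hScard : m ≤ (A \ B).card := by
        have := Finset.le_card_sdiff B A
        omega
      have hterm : ∀ i ∈ A \ B, 1 / ((m : ℝ) * c) ≤ 1 / w (e i) ^ 2 := by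
        intro i hi
        rw [Finset.mem_sdiff, hA, hB, Finset.mem_filter, Finset.mem_filter] at hi
        obtain ⟨⟨-, hi2m⟩, hiq⟩ := hi
        have hiq' : 1 / (m : ℝ) ≤ q (e i) := by
          by_contra hx
          exact hiq ⟨Finset.mem_univ _, by push_neg at hx; linarith⟩
        have hqc : q (e i) * w (e i) ^ 2 ≤ c := hle_c i hi2m
        have hw2pos : 0 < w (e i) ^ 2 := pow_pos (hwpos _) 2
        have hwle : w (e i) ^ 2 ≤ (m : ℝ) * c := by
          have h1 : (1 / (m : ℝ)) * w (e i) ^ 2 ≤ c := by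
            nlinarith
          rw [div_mul_eq_mul_div, one_mul, div_le_iff₀ hmpos] at h1
          linarith [h1]
        exact one_div_le_one_div_of_le hw2pos hwle
      have hHge : 1 / c ≤ H (2 * m) := by
        rw [hH]
        calc 1 / c = (m : ℝ) * (1 / ((m : ℝ) * c)) := by
              field_simp
          _ ≤ ((A \ B).card : ℝ) * (1 / ((m : ℝ) * c)) := by
              apply mul_le_mul_of_nonneg_right
              · exact_mod_cast hScard
              · positivity
          _ ≤ ∑ i ∈ A \ B, 1 / w (e i) ^ 2 := by
              have := Finset.card_nsmul_le_sum (A \ B) (fun i => 1 / w (e i) ^ 2)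
                (1 / ((m : ℝ) * c)) hterm
              simpa [nsmul_eq_mul] using this
          _ ≤ ∑ i ∈ A, 1 / w (e i) ^ 2 := by
              apply Finset.sum_le_sum_of_subset_of_nonneg (Finset.sdiff_subset)
              intro i _ _
              positivity
      have hHpos : 0 < H (2 * m) := lt_of_lt_of_le (by positivity) hHge
      have hfinal : 1 / H (2 * m) ≤ c := by
        rw [div_le_iff₀ hHpos]
        calc (1 : ℝ) = c * (1 / c) := by field_simp
          _ ≤ c * H (2 * m) := by
              exact mul_le_mul_of_nonneg_left hHge hc0
      exact absurd ha (by simp only [Set.mem_setOf_eq, ← hc]; linarith)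
    calc {a : α | q a * w a ^ 2 < 1 / H (2 * m)}.ncard
        ≤ (e '' {i : Fin K | (i : ℕ) < 2 * m}).ncard :=
          Set.ncard_le_ncard hsub (Set.Finite.image _ (Set.toFinite _))
      _ ≤ {i : Fin K | (i : ℕ) < 2 * m}.ncard := Set.ncard_image_le (Set.toFinite _)
      _ = 2 * m := by
          rw [aux_ncard_setOf (fun i : Fin K => (i : ℕ) < 2 * m)]
          rw [Finset.filter_congr_decidable]
          exact hAcard
  have h2mem : 2 * m ∈ {τ : ℕ | 1 ≤ τ ∧ τ ≤ K ∧
      {a : α | q a * w a ^ 2 < 1 / H τ}.ncard ≤ τ} := ⟨by omega, h2m, hmain⟩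
  rw [hmgap]
  exact Nat.sInf_le h2mem
end

section
/- If τ₀ ≥ 1 is an integer and every arm a ∈ A satisfies q_a ≥ 1/τ₀, then m_{ε,Δ} ≤ 2τ₀. -/
open Finset

/-- If every arm satisfies `q a ≥ 1/τ₀` for an integer `τ₀ ≥ 1`, then the
gap-dependent observation threshold satisfies `m_{ε,Δ} ≤ 2 τ₀`. -/
theorem gap_dependent_observation_threshold_le_of_q_ge
    {α : Type*} [Fintype α] [Nonempty α]
    (K : ℕ) (hK : Fintype.card α = K)
    (q Δ : α → ℝ) (ε : ℝ)
    (hq0 : ∀ a, 0 ≤ q a) (hq1 : ∀ a, q a ≤ 1)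
    (hΔ0 : ∀ a, 0 ≤ Δ a) (hε : 0 ≤ ε)
    (w : α → ℝ) (hw : ∀ a, w a = max (Δ a) (ε / 2))
    (hwpos : ∀ a, 0 < w a)
    (e : Fin K → α) (he : Function.Bijective e)
    (hsorted : ∀ i j : Fin K, i ≤ j →
      q (e i) * w (e i) ^ 2 ≤ q (e j) * w (e j) ^ 2)
    (H : ℕ → ℝ)
    (hH : ∀ r, H r = ∑ i ∈ univ.filter (fun i : Fin K => (i : ℕ) < r),
      1 / w (e i) ^ 2)
    (mgap : ℕ)
    (hmgap : mgap = sInf {τ : ℕ | 1 ≤ τ ∧ τ ≤ K ∧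
      {a : α | q a * w a ^ 2 < 1 / H τ}.ncard ≤ τ})
    (τ₀ : ℕ) (hτ₀ : 1 ≤ τ₀) (hqτ₀ : ∀ a, 1 / (τ₀ : ℝ) ≤ q a) :
    mgap ≤ 2 * τ₀ := by
  classical
  have hK1 : 1 ≤ K := by
    rw [← hK]; exact Fintype.card_pos
  have hτ₀R : (0 : ℝ) < (τ₀ : ℝ) := by exact_mod_cast hτ₀
  rw [hmgap]
  by_cases hKle : K ≤ 2 * τ₀
  · refine le_trans (Nat.sInf_le ?_) hKle
    refine ⟨hK1, le_refl K, ?_⟩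
    calc {a : α | q a * w a ^ 2 < 1 / H K}.ncard
        ≤ (Set.univ : Set α).ncard :=
          Set.ncard_le_ncard (Set.subset_univ _) Set.finite_univ
      _ = K := by rw [Set.ncard_univ, Nat.card_eq_fintype_card, hK]
  · push_neg at hKle
    set τ := 2 * τ₀ with hτdef
    have hτK : τ ≤ K := le_of_lt hKle
    have hτ1 : 1 ≤ τ := by omega
    set T : Finset (Fin K) := univ.filter (fun i : Fin K => (i : ℕ) < τ) with hT
    have hTcard : T.card = τ := by
      have hTeq : T = Finset.Iio (⟨τ, hKle⟩ : Fin K) := by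
        ext i
        simp [hT, Finset.mem_Iio, Fin.lt_def]
      rw [hTeq, Fin.card_Iio]
    -- H τ > 0
    have hHτ : H τ = ∑ i ∈ T, 1 / w (e i) ^ 2 := hH τ
    have hHpos : 0 < H τ := by
      rw [hHτ]
      apply Finset.sum_pos
      · intro i _
        have := hwpos (e i)
        positivity
      · refine Finset.card_pos.mp ?_
        rw [hTcard]; omega
    -- the cardinality condition at τ
    set S : Set α := {a : α | q a * w a ^ 2 < 1 / H τ} with hS
    have hScard : S.ncard ≤ τ := by
      by_contra hc
      push_neg at hc
      -- pull back S along e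
      set S' : Finset (Fin K) := univ.filter (fun i : Fin K => e i ∈ S) with hS'
      have hS'card : S'.card = S.ncard := by
        have himg : S'.image e = S.toFinset := by
          ext a
          simp only [hS', Finset.mem_image, Finset.mem_filter, Finset.mem_univ,
            true_and, Set.mem_toFinset]
          constructor
          · rintro ⟨i, hi, rfl⟩; exact hi
          · intro ha
            obtain ⟨i, rfl⟩ := he.2 a
            exact ⟨i, ha, rfl⟩
        have := Finset.card_image_of_injective S' he.1
        rw [himg] at this
        rw [← this, Set.ncard_eq_toFinset_card']
      -- there is an element of S' with index ≥ τ
      have hex : ∃ j ∈ S', τ ≤ (j : ℕ) := by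
        by_contra hall
        push_neg at hall
        have hsub : S' ⊆ T := by
          intro j hj
          simp only [hT, Finset.mem_filter, Finset.mem_univ, true_and]
          exact hall j hj
        have := Finset.card_le_card hsub
        rw [hS'card, hTcard] at this
        omega
      obtain ⟨j, hjS', hjτ⟩ := hex
      have hjS : e j ∈ S := by
        simpa [hS'] using hjS'
      -- every i ∈ T satisfies e i ∈ S
      have hTS : ∀ i ∈ T, q (e i) * w (e i) ^ 2 < 1 / H τ := by
        intro i hi
        have hiτ : (i : ℕ) < τ := by
          simpa [hT] using hi
        have hij : i ≤ j := by
          rw [Fin.le_def]; omega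
        exact lt_of_le_of_lt (hsorted i j hij) hjS
      -- hence each term of H τ exceeds H τ / τ₀
      have hterm : ∀ i ∈ T, H τ / (τ₀ : ℝ) < 1 / w (e i) ^ 2 := by
        intro i hi
        have hw2 : (0 : ℝ) < w (e i) ^ 2 := by
          have := hwpos (e i); positivity
        rw [div_lt_div_iff₀ hτ₀R hw2]
        have hq : 1 / (τ₀ : ℝ) ≤ q (e i) := hqτ₀ (e i)
        have h1 : (1 / (τ₀ : ℝ)) * w (e i) ^ 2 ≤ q (e i) * w (e i) ^ 2 :=
          mul_le_mul_of_nonneg_right hq (le_of_lt hw2)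
        have h2 : (1 / (τ₀ : ℝ)) * w (e i) ^ 2 < 1 / H τ :=
          lt_of_le_of_lt h1 (hTS i hi)
        have hτ₀ne : (τ₀ : ℝ) ≠ 0 := ne_of_gt hτ₀R
        have h3 : w (e i) ^ 2 < (τ₀ : ℝ) / H τ := by
          calc w (e i) ^ 2 = (τ₀ : ℝ) * ((1 / (τ₀ : ℝ)) * w (e i) ^ 2) := by
                field_simp
            _ < (τ₀ : ℝ) * (1 / H τ) := mul_lt_mul_of_pos_left h2 hτ₀R
            _ = (τ₀ : ℝ) / H τ := by ring
        calc H τ * w (e i) ^ 2 < H τ * ((τ₀ : ℝ) / H τ) :=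
              mul_lt_mul_of_pos_left h3 hHpos
          _ = (τ₀ : ℝ) := by field_simp
          _ = 1 * (τ₀ : ℝ) := by ring
      -- sum up
      have hsum : ∑ i ∈ T, H τ / (τ₀ : ℝ) < ∑ i ∈ T, 1 / w (e i) ^ 2 := by
        apply Finset.sum_lt_sum_of_nonempty
        · refine Finset.card_pos.mp ?_
          rw [hTcard]; omega
        · exact hterm
      rw [Finset.sum_const, hTcard, ← hHτ] at hsum
      have : (τ : ℝ) * (H τ / (τ₀ : ℝ)) < H τ := by
        simpa [nsmul_eq_mul] using hsum
      have hτR : ((2 * τ₀ : ℕ) : ℝ) = 2 * (τ₀ : ℝ) := by push_cast; ring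
      rw [hτdef, hτR] at this
      have h2H : 2 * H τ < H τ := by
        have : 2 * (τ₀ : ℝ) * (H τ / (τ₀ : ℝ)) = 2 * H τ := by
          field_simp
        linarith [this ▸ ‹2 * (τ₀ : ℝ) * (H τ / (τ₀ : ℝ)) < H τ›]
      linarith
    exact Nat.sInf_le ⟨hτ1, hτK, hScard⟩
end

section
/- If z ∈ ℝ^d is a unit vector with |z_1| ≥ d₀/√(d₀² + 1), then every vector v ∈ {0,1}^d with v_1 = 1 satisfies |⟨v, z⟩| ≥ 1/√(4d² − 3). -/
/-- If `z ∈ ℝ^d` is a unit vector whose first coordinate satisfies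
`|z 0| ≥ d₀ / √(d₀² + 1)` with `d₀ = √(d-1) + 1/(2√(d-1))`, then every
vector `v ∈ {0,1}^d` with first coordinate `1` satisfies
`|⟨v, z⟩| ≥ 1 / √(4 d² - 3)`. -/
theorem abs_inner_ge_of_abs_first_coord_large
    (d : ℕ) [NeZero d] (hd : 2 ≤ d)
    (d₀ : ℝ)
    (hd₀ : d₀ = Real.sqrt ((d : ℝ) - 1) + 1 / (2 * Real.sqrt ((d : ℝ) - 1)))
    (z : Fin d → ℝ) (hz : ∑ i, z i ^ 2 = 1)
    (hz1 : d₀ / Real.sqrt (d₀ ^ 2 + 1) ≤ |z 0|) :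
    ∀ v : Fin d → ℝ, (∀ i, v i = 0 ∨ v i = 1) → v 0 = 1 →
      1 / Real.sqrt (4 * (d : ℝ) ^ 2 - 3) ≤ |∑ i, v i * z i| := by
  intro v hv hv0
  classical
  have hd1 : (1:ℝ) ≤ (d : ℝ) - 1 := by
    have : (2:ℝ) ≤ (d : ℝ) := by exact_mod_cast hd
    linarith
  set a := Real.sqrt ((d : ℝ) - 1) with ha
  have ha1 : (1:ℝ) ≤ a := by
    have h := Real.sqrt_le_sqrt hd1
    rwa [Real.sqrt_one] at h
  have hapos : (0:ℝ) < a := lt_of_lt_of_le one_pos ha1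
  have hasq : a ^ 2 = (d : ℝ) - 1 := Real.sq_sqrt (by linarith)
  have hd₀pos : 0 < d₀ := by rw [hd₀]; positivity
  have hDpos : (0:ℝ) < d₀ ^ 2 + 1 := by positivity
  have hsD : 0 < Real.sqrt (d₀ ^ 2 + 1) := Real.sqrt_pos.mpr hDpos
  have hsDsq : Real.sqrt (d₀ ^ 2 + 1) ^ 2 = d₀ ^ 2 + 1 := Real.sq_sqrt hDpos.le
  have hD : d₀ ^ 2 + 1 = a ^ 2 + 2 + 1 / (4 * a ^ 2) := by
    rw [hd₀]; field_simp; ring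
  -- key identity: √(4d²-3) = 2a√(d₀²+1)
  have hkey : Real.sqrt (4 * (d : ℝ) ^ 2 - 3) = 2 * a * Real.sqrt (d₀ ^ 2 + 1) := by
    have h1 : 4 * (d : ℝ) ^ 2 - 3 = (2 * a) ^ 2 * (d₀ ^ 2 + 1) := by
      rw [hD]; field_simp; linear_combination (-16*(a^2+(d:ℝ)+1)) * hasq
    rw [h1, Real.sqrt_mul (by positivity), Real.sqrt_sq (by positivity)]
  -- split off the first coordinate
  set s := ∑ i ∈ ({0}ᶜ : Finset (Fin d)), v i * z i with hs
  have hsplit : ∑ i, v i * z i = z 0 + s := by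
    rw [Fintype.sum_eq_add_sum_compl 0 (fun i => v i * z i), hv0, one_mul]
  set T := ∑ i ∈ ({0}ᶜ : Finset (Fin d)), z i ^ 2 with hT
  have hTval : T = 1 - z 0 ^ 2 := by
    have := Fintype.sum_eq_add_sum_compl 0 (fun i => z i ^ 2)
    rw [hz] at this; linarith [this]
  -- Cauchy–Schwarz
  have hCS : s ^ 2 ≤ (∑ i ∈ ({0}ᶜ : Finset (Fin d)), v i ^ 2) * T :=
    Finset.sum_mul_sq_le_sq_mul_sq _ v z
  have hvsum : ∑ i ∈ ({0}ᶜ : Finset (Fin d)), v i ^ 2 ≤ (d : ℝ) - 1 := by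
    have hcard : (({0}ᶜ : Finset (Fin d))).card = d - 1 := by
      simp [Finset.card_compl]
    calc ∑ i ∈ ({0}ᶜ : Finset (Fin d)), v i ^ 2
        ≤ ∑ i ∈ ({0}ᶜ : Finset (Fin d)), 1 := by
          apply Finset.sum_le_sum
          intro i _
          rcases hv i with h | h <;> rw [h] <;> norm_num
      _ = ((d : ℝ) - 1) := by
          rw [Finset.sum_const, hcard]
          have : ((d - 1 : ℕ) : ℝ) = (d : ℝ) - 1 := by
            have := Nat.cast_sub (le_trans (by norm_num) hd) (R := ℝ) (m := 1) (n := d)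
            simpa using this
          simp [this]
  have hz0sq : d₀ ^ 2 / (d₀ ^ 2 + 1) ≤ z 0 ^ 2 := by
    have h0 : 0 ≤ d₀ / Real.sqrt (d₀ ^ 2 + 1) := by positivity
    have := mul_self_le_mul_self h0 hz1
    calc d₀ ^ 2 / (d₀ ^ 2 + 1)
        = (d₀ / Real.sqrt (d₀ ^ 2 + 1)) ^ 2 := by rw [div_pow, hsDsq]
      _ = (d₀ / Real.sqrt (d₀ ^ 2 + 1)) * (d₀ / Real.sqrt (d₀ ^ 2 + 1)) := pow_two _
      _ ≤ |z 0| * |z 0| := this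
      _ = z 0 ^ 2 := by rw [← abs_mul, abs_mul_self]; ring
  have hTle : T ≤ 1 / (d₀ ^ 2 + 1) := by
    rw [hTval]
    have : d₀ ^ 2 / (d₀ ^ 2 + 1) = 1 - 1 / (d₀ ^ 2 + 1) := by field_simp; ring
    linarith [hz0sq, this ▸ hz0sq]
  have hTnonneg : 0 ≤ T := Finset.sum_nonneg fun i _ => sq_nonneg _
  have hvnonneg : 0 ≤ ∑ i ∈ ({0}ᶜ : Finset (Fin d)), v i ^ 2 :=
    Finset.sum_nonneg fun i _ => sq_nonneg _
  have hs2 : s ^ 2 ≤ a ^ 2 / (d₀ ^ 2 + 1) := by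
    have : (∑ i ∈ ({0}ᶜ : Finset (Fin d)), v i ^ 2) * T ≤ ((d : ℝ) - 1) * (1 / (d₀ ^ 2 + 1)) := by
      apply mul_le_mul hvsum hTle hTnonneg (by linarith)
    rw [hasq]
    calc s ^ 2 ≤ _ := hCS
      _ ≤ ((d : ℝ) - 1) * (1 / (d₀ ^ 2 + 1)) := this
      _ = ((d : ℝ) - 1) / (d₀ ^ 2 + 1) := by ring
  have hsabs : |s| ≤ a / Real.sqrt (d₀ ^ 2 + 1) := by
    have h1 : |s| = Real.sqrt (s ^ 2) := (Real.sqrt_sq_eq_abs s).symm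
    rw [h1]
    have h2 : Real.sqrt (a ^ 2 / (d₀ ^ 2 + 1)) = a / Real.sqrt (d₀ ^ 2 + 1) := by
      rw [Real.sqrt_div (sq_nonneg a), Real.sqrt_sq hapos.le]
    rw [← h2]
    exact Real.sqrt_le_sqrt hs2
  have hz0abs : d₀ / Real.sqrt (d₀ ^ 2 + 1) ≤ |z 0| := hz1
  have hfinal : (d₀ - a) / Real.sqrt (d₀ ^ 2 + 1) ≤ |z 0 + s| := by
    have habs : |z 0| - |s| ≤ |z 0 + s| := by
      have := abs_add_le (z 0 + s) (-s)
      simp at this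
      linarith [this, abs_neg s]
    have : (d₀ - a) / Real.sqrt (d₀ ^ 2 + 1) = d₀ / Real.sqrt (d₀ ^ 2 + 1) - a / Real.sqrt (d₀ ^ 2 + 1) := by ring
    linarith
  rw [hsplit]
  have heq : 1 / Real.sqrt (4 * (d : ℝ) ^ 2 - 3) = (d₀ - a) / Real.sqrt (d₀ ^ 2 + 1) := by
    rw [hkey]
    have hda : d₀ - a = 1 / (2 * a) := by rw [hd₀]; ring
    rw [hda]
    field_simp
  rw [heq]
  exact hfinal
end

section
/- Chernoff-type maximal inequality: let S_t = Σ_{i=1}^t (X_i − μ). For every integer n ≥ 1 and every real x with 0 ≤ x ≤ nμ, the probability that there exists t ∈ {1,…,n} with S_t ≥ x is at most exp(−x²/(3μn)). -/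
open MeasureTheory Finset

set_option linter.unusedSectionVars false


lemma aux_integrable_bdd {Ω : Type*} [MeasurableSpace Ω] (P : Measure Ω) [IsProbabilityMeasure P]
    {f : Ω → ℝ} (C : ℝ) (hf : Measurable f) (h : ∀ ω, ‖f ω‖ ≤ C) : Integrable f P :=
  (integrable_const C).mono' hf.aestronglyMeasurable (Filter.Eventually.of_forall h)

lemma aux_block_indep {Ω : Type*} [MeasurableSpace Ω] {P : Measure Ω}
    {X : ℕ → Ω → ℝ} (hXmeas : ∀ i, Measurable (X i))
    (hindep : ProbabilityTheory.iIndepFun X P)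
    (a b c : ℕ) (φ : (Fin b → ℝ) → ℝ) (ψ : (Fin c → ℝ) → ℝ)
    (hφ : Measurable φ) (hψ : Measurable ψ) :
    ProbabilityTheory.IndepFun (fun ω => φ (fun i => X (a + i) ω))
      (fun ω => ψ (fun j => X (a + b + j) ω)) P := by
  have hST : Disjoint (Finset.Ico a (a + b)) (Finset.Ico (a + b) (a + b + c)) := by
    simp [Finset.disjoint_left]; omega
  have h := hindep.indepFun_finset _ _ hST hXmeas
  have he₁ : Measurable (fun (v : (Finset.Ico a (a+b) : Finset ℕ) → ℝ) (i : Fin b) =>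
      v ⟨a + i, Finset.mem_Ico.2 (by omega)⟩) :=
    measurable_pi_lambda _ (fun i => measurable_pi_apply _)
  have he₂ : Measurable (fun (v : (Finset.Ico (a+b) (a+b+c) : Finset ℕ) → ℝ) (j : Fin c) =>
      v ⟨a + b + j, Finset.mem_Ico.2 (by omega)⟩) :=
    measurable_pi_lambda _ (fun j => measurable_pi_apply _)
  exact h.comp (hφ.comp he₁) (hψ.comp he₂)

section
variable {Ω : Type*} [MeasurableSpace Ω] (P : Measure Ω) [IsProbabilityMeasure P]
    (μ₀ : ℝ) (hμ0 : 0 < μ₀) (hμ1 : μ₀ ≤ 1)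
    (X : ℕ → Ω → ℝ) (hXmeas : ∀ i, Measurable (X i))
    (hX01 : ∀ i ω, X i ω = 0 ∨ X i ω = 1)
    (hXmean : ∀ i, P {ω | X i ω = 1} = ENNReal.ofReal μ₀)

include hμ0 hμ1 hX01 in
lemma aux_abs_le (i : ℕ) (ω : Ω) : |X i ω - μ₀| ≤ 1 := by
  rcases hX01 i ω with h | h <;> rw [h, abs_le] <;> constructor <;> linarith

include hμ0 hμ1 hX01 in
lemma aux_norm_exp_le (l : ℝ) (s : Finset ℕ) (ω : Ω) :
    ‖Real.exp (l * ∑ i ∈ s, (X i ω - μ₀))‖ ≤ Real.exp (|l| * s.card) := by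
  rw [Real.norm_eq_abs, abs_of_pos (Real.exp_pos _)]
  apply Real.exp_le_exp.2
  calc l * ∑ i ∈ s, (X i ω - μ₀) ≤ |l * ∑ i ∈ s, (X i ω - μ₀)| := le_abs_self _
  _ = |l| * |∑ i ∈ s, (X i ω - μ₀)| := abs_mul _ _
  _ ≤ |l| * (s.card * 1) := by
      apply mul_le_mul_of_nonneg_left _ (abs_nonneg l)
      calc |∑ i ∈ s, (X i ω - μ₀)| ≤ ∑ i ∈ s, |X i ω - μ₀| := Finset.abs_sum_le_sum_abs _ _
      _ ≤ ∑ _i ∈ s, (1:ℝ) := Finset.sum_le_sum (fun i _ => aux_abs_le μ₀ hμ0 hμ1 X hX01 i ω)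
      _ = s.card * 1 := by simp
  _ = |l| * s.card := by ring

include hμ0 hμ1 hX01 hXmeas in
lemma aux_int_exp (l : ℝ) (s : Finset ℕ) :
    Integrable (fun ω => Real.exp (l * ∑ i ∈ s, (X i ω - μ₀))) P := by
  apply aux_integrable_bdd P (Real.exp (|l| * s.card))
  · exact Real.measurable_exp.comp ((Finset.measurable_sum s
      (fun i _ => (hXmeas i).sub measurable_const)).const_mul l)
  · exact fun ω => aux_norm_exp_le μ₀ hμ0 hμ1 X hX01 l s ω

include hμ0 hμ1 hXmeas hX01 hXmean in
lemma aux_bern (i : ℕ) (l : ℝ) :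
    ∫ ω, Real.exp (l * (X i ω - μ₀)) ∂P
      = Real.exp (-(l * μ₀)) * (1 + μ₀ * (Real.exp l - 1)) := by
  have hXint : Integrable (X i) P := by
    apply aux_integrable_bdd P 1 (hXmeas i)
    intro ω; rcases hX01 i ω with h | h <;> simp [h]
  have hXval : ∫ ω, X i ω ∂P = μ₀ := by
    have hind : X i = Set.indicator {ω | X i ω = 1} (fun _ => (1:ℝ)) := by
      funext ω
      rcases hX01 i ω with h | h <;> simp [Set.indicator_apply, h]
    have hs : MeasurableSet {ω | X i ω = 1} := (hXmeas i) (measurableSet_singleton 1)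
    rw [hind, integral_indicator_const (1:ℝ) hs,
      measureReal_def, hXmean i, ENNReal.toReal_ofReal hμ0.le, smul_eq_mul, mul_one]
  have hpt : (fun ω => Real.exp (l * (X i ω - μ₀)))
      = fun ω => Real.exp (-(l * μ₀)) + (Real.exp (-(l * μ₀)) * (Real.exp l - 1)) * X i ω := by
    funext ω
    rcases hX01 i ω with h | h
    · rw [h]; rw [show l * ((0:ℝ) - μ₀) = -(l*μ₀) by ring]; ring
    · rw [h]; rw [show l * ((1:ℝ) - μ₀) = l + -(l*μ₀) by ring, Real.exp_add]; ring
  rw [hpt, integral_add (integrable_const _) (hXint.const_mul _), integral_const,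
    integral_const_mul, hXval]
  simp [measure_univ]; ring
end
section
variable {Ω : Type*} [MeasurableSpace Ω] (P : Measure Ω) [IsProbabilityMeasure P]
    (μ₀ : ℝ) (hμ0 : 0 < μ₀) (hμ1 : μ₀ ≤ 1)
    (X : ℕ → Ω → ℝ) (hXmeas : ∀ i, Measurable (X i))
    (hX01 : ∀ i ω, X i ω = 0 ∨ X i ω = 1)
    (hXmean : ∀ i, P {ω | X i ω = 1} = ENNReal.ofReal μ₀)
    (hindep : ProbabilityTheory.iIndepFun X P)

include hμ0 hμ1 hXmeas hX01 hXmean hindep in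
lemma aux_mgf (l : ℝ) (a k : ℕ) :
    ∫ ω, Real.exp (l * ∑ i ∈ Finset.Ico a (a + k), (X i ω - μ₀)) ∂P
      = (Real.exp (-(l * μ₀)) * (1 + μ₀ * (Real.exp l - 1))) ^ k := by
  induction k with
  | zero => simp [measure_univ]
  | succ k ih =>
    have hsplit : (fun ω => Real.exp (l * ∑ i ∈ Finset.Ico a (a + (k+1)), (X i ω - μ₀)))
        = fun ω => Real.exp (l * ∑ i ∈ Finset.Ico a (a + k), (X i ω - μ₀))
            * Real.exp (l * (X (a + k) ω - μ₀)) := by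
      funext ω
      rw [show a + (k+1) = (a + k) + 1 from rfl,
        Finset.sum_Ico_succ_top (Nat.le_add_right a k), mul_add, Real.exp_add]
    have hF1 : (fun ω => Real.exp (l * ∑ i ∈ Finset.Ico a (a + k), (X i ω - μ₀)))
        = fun ω => (fun v : Fin k → ℝ => Real.exp (l * ∑ i : Fin k, (v i - μ₀)))
            (fun i : Fin k => X (a + i) ω) := by
      funext ω
      simp only
      rw [Finset.sum_Ico_eq_sum_range, Fin.sum_univ_eq_sum_range (fun i => X (a+i) ω - μ₀)]
      simp
    have hF2 : (fun ω => Real.exp (l * (X (a + k) ω - μ₀)))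
        = fun ω => (fun w : Fin 1 → ℝ => Real.exp (l * (w 0 - μ₀)))
            (fun j : Fin 1 => X (a + k + j) ω) := by
      funext ω; simp
    have hφ : Measurable (fun v : Fin k → ℝ => Real.exp (l * ∑ i : Fin k, (v i - μ₀))) :=
      Real.measurable_exp.comp ((Finset.measurable_sum Finset.univ
        (fun i _ => (measurable_pi_apply i).sub measurable_const)).const_mul l)
    have hψ : Measurable (fun w : Fin 1 → ℝ => Real.exp (l * (w 0 - μ₀))) :=
      Real.measurable_exp.comp ((by fun_prop : Measurable fun w : Fin 1 → ℝ => w 0 - μ₀).const_mul l)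
    have hind : ProbabilityTheory.IndepFun
        (fun ω => Real.exp (l * ∑ i ∈ Finset.Ico a (a + k), (X i ω - μ₀)))
        (fun ω => Real.exp (l * (X (a + k) ω - μ₀))) P := by
      rw [hF1, hF2]
      exact aux_block_indep hXmeas hindep a k 1 _ _ hφ hψ
    have hint1 := aux_int_exp P μ₀ hμ0 hμ1 X hXmeas hX01 l (Finset.Ico a (a+k))
    have hint2 : Integrable (fun ω => Real.exp (l * (X (a + k) ω - μ₀))) P := by
      have := aux_int_exp P μ₀ hμ0 hμ1 X hXmeas hX01 l {a + k}
      simpa using this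
    have hmul := hind.integral_mul_eq_mul_integral hint1.aestronglyMeasurable hint2.aestronglyMeasurable
    rw [hsplit, show (fun ω => Real.exp (l * ∑ i ∈ Finset.Ico a (a + k), (X i ω - μ₀))
            * Real.exp (l * (X (a + k) ω - μ₀)))
        = ((fun ω => Real.exp (l * ∑ i ∈ Finset.Ico a (a + k), (X i ω - μ₀)))
            * fun ω => Real.exp (l * (X (a + k) ω - μ₀))) from rfl, hmul, ih,
      aux_bern P μ₀ hμ0 hμ1 X hXmeas hX01 hXmean (a+k) l, pow_succ]
end
section
variable {Ω : Type*} [MeasurableSpace Ω] (P : Measure Ω) [IsProbabilityMeasure P]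
    (μ₀ : ℝ) (hμ0 : 0 < μ₀) (hμ1 : μ₀ ≤ 1)
    (X : ℕ → Ω → ℝ) (hXmeas : ∀ i, Measurable (X i))
    (hX01 : ∀ i ω, X i ω = 0 ∨ X i ω = 1)
    (hXmean : ∀ i, P {ω | X i ω = 1} = ENNReal.ofReal μ₀)
    (hindep : ProbabilityTheory.iIndepFun X P)

/-- the event: first time in `[1,t]` that the centered sum reaches `x` is `t` -/
def chSet (μ₀ x : ℝ) (X : ℕ → Ω → ℝ) (t : ℕ) : Set Ω :=
  {ω | x ≤ ∑ i ∈ Finset.range t, (X i ω - μ₀) ∧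
    ∀ s, 1 ≤ s → s < t → ∑ i ∈ Finset.range s, (X i ω - μ₀) < x}

lemma chSet_meas (x : ℝ) (hXmeas : ∀ i, Measurable (X i)) (t : ℕ) :
    MeasurableSet (chSet μ₀ x X t) := by
  have hSmeas : ∀ s : ℕ, Measurable (fun ω => ∑ i ∈ Finset.range s, (X i ω - μ₀)) :=
    fun s => Finset.measurable_sum _ (fun i _ => (hXmeas i).sub measurable_const)
  have : chSet μ₀ x X t = {ω | x ≤ ∑ i ∈ Finset.range t, (X i ω - μ₀)} ∩
      ⋂ (s : ℕ), ⋂ (_ : 1 ≤ s), ⋂ (_ : s < t),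
        {ω | ∑ i ∈ Finset.range s, (X i ω - μ₀) < x} := by
    ext ω; simp [chSet, Set.mem_iInter]
  rw [this]
  exact (measurableSet_le measurable_const (hSmeas t)).inter
    (MeasurableSet.iInter fun s => MeasurableSet.iInter fun _ => MeasurableSet.iInter fun _ =>
      measurableSet_lt (hSmeas s) measurable_const)

lemma chSet_disj (x : ℝ) {t t' : ℕ} {ω : Ω} (h : ω ∈ chSet μ₀ x X t)
    (h' : ω ∈ chSet μ₀ x X t') (h1 : 1 ≤ t) (h1' : 1 ≤ t') : t = t' := by
  by_contra hne
  rcases Nat.lt_or_ge t t' with hlt | hge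
  · exact absurd h.1 (not_le.2 (h'.2 t h1 hlt))
  · exact absurd h'.1 (not_le.2 (h.2 t' h1' (lt_of_le_of_ne hge (Ne.symm hne))))

include hμ0 hμ1 hX01 hXmeas in
lemma aux_indic_int (x l : ℝ) (t u : ℕ) :
    Integrable ((chSet μ₀ x X t).indicator
      (fun ω => Real.exp (l * ∑ i ∈ Finset.range u, (X i ω - μ₀)))) P := by
  apply aux_integrable_bdd P (Real.exp (|l| * u))
  · exact (Real.measurable_exp.comp ((Finset.measurable_sum _
      (fun i _ => (hXmeas i).sub measurable_const)).const_mul l)).indicator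
      (chSet_meas (μ₀ := μ₀) (x := x) (X := X) hXmeas t)
  · intro ω
    refine le_trans (norm_indicator_le_norm_self _ _) ?_
    have := aux_norm_exp_le μ₀ hμ0 hμ1 X hX01 l (Finset.range u) ω
    simpa using this
end
def chsst (μ₀ : ℝ) (t s : ℕ) (v : Fin t → ℝ) : ℝ :=
  ∑ i : Fin t, if (i : ℕ) < s then v i - μ₀ else 0

noncomputable def chphi (μ₀ x l : ℝ) (t : ℕ) : (Fin t → ℝ) → ℝ :=
  Set.indicator {v | x ≤ chsst μ₀ t t v ∧ ∀ s, 1 ≤ s → s < t → chsst μ₀ t s v < x}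
    (fun v => Real.exp (l * chsst μ₀ t t v))

lemma chsst_meas (μ₀ : ℝ) (t s : ℕ) : Measurable (chsst μ₀ t s) := by
  apply Finset.measurable_sum
  intro i _
  by_cases h : (i : ℕ) < s
  · simpa [h] using (by fun_prop : Measurable fun a : Fin t → ℝ => a i - μ₀)
  · simpa [h] using measurable_const
 
lemma chphi_meas (μ₀ x l : ℝ) (t : ℕ) : Measurable (chphi μ₀ x l t) := by
  apply Measurable.indicator
  · exact Real.measurable_exp.comp ((chsst_meas μ₀ t t).const_mul l)
  · have : {v : Fin t → ℝ | x ≤ chsst μ₀ t t v ∧ ∀ s, 1 ≤ s → s < t → chsst μ₀ t s v < x}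
        = {v | x ≤ chsst μ₀ t t v} ∩
          ⋂ (s : ℕ), ⋂ (_ : 1 ≤ s), ⋂ (_ : s < t), {v | chsst μ₀ t s v < x} := by
      ext v; simp [Set.mem_iInter]
    rw [this]
    exact (measurableSet_le measurable_const (chsst_meas μ₀ t t)).inter
      (MeasurableSet.iInter fun s => MeasurableSet.iInter fun _ => MeasurableSet.iInter fun _ =>
        measurableSet_lt (chsst_meas μ₀ t s) measurable_const)

lemma chsst_eval {Ω : Type*} (μ₀ : ℝ) (X : ℕ → Ω → ℝ) (t s : ℕ) (hst : s ≤ t) (ω : Ω) :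
    chsst μ₀ t s (fun i : Fin t => X (i : ℕ) ω) = ∑ i ∈ Finset.range s, (X i ω - μ₀) := by
  unfold chsst
  rw [Fin.sum_univ_eq_sum_range (fun j => if j < s then X j ω - μ₀ else 0) t,
    ← Finset.sum_filter]
  congr 1
  ext i
  simp only [Finset.mem_filter, Finset.mem_range]
  omega

lemma chphi_eval {Ω : Type*} (μ₀ x l : ℝ) (X : ℕ → Ω → ℝ) (t : ℕ) (ω : Ω) :
    chphi μ₀ x l t (fun i : Fin t => X (i : ℕ) ω)
      = (chSet μ₀ x X t).indicator
          (fun ω' => Real.exp (l * ∑ i ∈ Finset.range t, (X i ω' - μ₀))) ω := by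
  have hmem : (fun i : Fin t => X (i : ℕ) ω) ∈
      {v : Fin t → ℝ | x ≤ chsst μ₀ t t v ∧ ∀ s, 1 ≤ s → s < t → chsst μ₀ t s v < x}
      ↔ ω ∈ chSet μ₀ x X t := by
    constructor
    · rintro ⟨h1, h2⟩
      refine ⟨by rwa [chsst_eval μ₀ X t t le_rfl ω] at h1, fun s hs1 hst => ?_⟩
      have := h2 s hs1 hst
      rwa [chsst_eval μ₀ X t s hst.le ω] at this
    · rintro ⟨h1, h2⟩
      refine ⟨by rwa [chsst_eval μ₀ X t t le_rfl ω], fun s hs1 hst => ?_⟩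
      rw [chsst_eval μ₀ X t s hst.le ω]
      exact h2 s hs1 hst
  classical
  unfold chphi
  rw [Set.indicator_apply, Set.indicator_apply,
    if_congr hmem (by rw [chsst_eval μ₀ X t t le_rfl ω]) rfl]
lemma aux_one_le_m (μ₀ : ℝ) (hμ0 : 0 < μ₀) (hμ1 : μ₀ ≤ 1) (l : ℝ) (hl0 : 0 ≤ l) :
    1 ≤ Real.exp (-(l * μ₀)) * (1 + μ₀ * (Real.exp l - 1)) := by
  have hgm := Real.geom_mean_le_arith_mean2_weighted (w₁ := μ₀) (w₂ := 1 - μ₀)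
    (p₁ := Real.exp l) (p₂ := 1) hμ0.le (by linarith) (Real.exp_pos l).le zero_le_one (by ring)
  rw [Real.one_rpow, mul_one, ← Real.exp_mul] at hgm
  have : Real.exp (l * μ₀) ≤ 1 + μ₀ * (Real.exp l - 1) := by linarith
  calc (1:ℝ) = Real.exp (-(l * μ₀)) * Real.exp (l * μ₀) := by
        rw [← Real.exp_add]; simp
  _ ≤ Real.exp (-(l * μ₀)) * (1 + μ₀ * (Real.exp l - 1)) :=
      mul_le_mul_of_nonneg_left this (Real.exp_pos _).le

lemma aux_m_le_exp (μ₀ : ℝ) (l : ℝ) (hμ0 : 0 ≤ μ₀) (hl0 : 0 ≤ l) :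
    Real.exp (-(l * μ₀)) * (1 + μ₀ * (Real.exp l - 1))
      ≤ Real.exp (μ₀ * (Real.exp l - 1) - l * μ₀) := by
  have h1 : 1 + μ₀ * (Real.exp l - 1) ≤ Real.exp (μ₀ * (Real.exp l - 1)) := by
    have := Real.add_one_le_exp (μ₀ * (Real.exp l - 1))
    linarith
  calc Real.exp (-(l * μ₀)) * (1 + μ₀ * (Real.exp l - 1))
      ≤ Real.exp (-(l * μ₀)) * Real.exp (μ₀ * (Real.exp l - 1)) :=
        mul_le_mul_of_nonneg_left h1 (Real.exp_pos _).le
  _ = Real.exp (μ₀ * (Real.exp l - 1) - l * μ₀) := by rw [← Real.exp_add]; ring_nf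

section
variable {Ω : Type*} [MeasurableSpace Ω] (P : Measure Ω) [IsProbabilityMeasure P]
    (μ₀ : ℝ) (hμ0 : 0 < μ₀) (hμ1 : μ₀ ≤ 1)
    (X : ℕ → Ω → ℝ) (hXmeas : ∀ i, Measurable (X i))
    (hX01 : ∀ i ω, X i ω = 0 ∨ X i ω = 1)
    (hXmean : ∀ i, P {ω | X i ω = 1} = ENNReal.ofReal μ₀)
    (hindep : ProbabilityTheory.iIndepFun X P)

include hμ0 hμ1 hXmeas hX01 hXmean hindep in
lemma aux_key (x l : ℝ) (hl0 : 0 ≤ l) (t n : ℕ) (htn : t ≤ n) :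
    Real.exp (l * x) * (P (chSet μ₀ x X t)).toReal ≤
      ∫ ω, (chSet μ₀ x X t).indicator
        (fun ω' => Real.exp (l * ∑ i ∈ Finset.range n, (X i ω' - μ₀))) ω ∂P := by
  have hA : MeasurableSet (chSet μ₀ x X t) := chSet_meas (μ₀ := μ₀) (x := x) (X := X) hXmeas t
  set m : ℝ := Real.exp (-(l * μ₀)) * (1 + μ₀ * (Real.exp l - 1)) with hm
  -- step 1
  have hFint : Integrable ((chSet μ₀ x X t).indicator
      (fun ω' => Real.exp (l * ∑ i ∈ Finset.range t, (X i ω' - μ₀)))) P :=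
    aux_indic_int P μ₀ hμ0 hμ1 X hXmeas hX01 x l t t
  have step1 : Real.exp (l * x) * (P (chSet μ₀ x X t)).toReal ≤
      ∫ ω, (chSet μ₀ x X t).indicator
        (fun ω' => Real.exp (l * ∑ i ∈ Finset.range t, (X i ω' - μ₀))) ω ∂P := by
    have hconst := integral_indicator_const (μ := P) (Real.exp (l * x)) hA
    rw [smul_eq_mul, measureReal_def] at hconst
    rw [mul_comm, ← hconst]
    apply integral_mono ?_ hFint ?_
    · apply aux_integrable_bdd P (Real.exp (l * x))
      · exact measurable_const.indicator hA
      · intro ω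
        refine le_trans (norm_indicator_le_norm_self _ _) ?_
        simp [abs_of_pos (Real.exp_pos _)]
    · intro ω
      by_cases h : ω ∈ chSet μ₀ x X t
      · rw [Set.indicator_of_mem h, Set.indicator_of_mem h]
        exact Real.exp_le_exp.2 (mul_le_mul_of_nonneg_left h.1 hl0)
      · rw [Set.indicator_of_notMem h, Set.indicator_of_notMem h]
  -- independence
  have hφmeas := chphi_meas μ₀ x l t
  have hψmeas : Measurable (fun w : Fin (n - t) → ℝ =>
      Real.exp (l * ∑ j : Fin (n - t), (w j - μ₀))) :=
    Real.measurable_exp.comp ((Finset.measurable_sum _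
      (fun j _ => (measurable_pi_apply j).sub measurable_const)).const_mul l)
  have hF_eq : ((chSet μ₀ x X t).indicator
      (fun ω' => Real.exp (l * ∑ i ∈ Finset.range t, (X i ω' - μ₀))))
      = fun ω => chphi μ₀ x l t (fun i : Fin t => X (0 + (i : ℕ)) ω) := by
    funext ω
    simp only [zero_add]
    rw [chphi_eval μ₀ x l X t ω]
  have hG_eq : (fun ω => Real.exp (l * ∑ i ∈ Finset.Ico t n, (X i ω - μ₀)))
      = fun ω => (fun w : Fin (n - t) → ℝ => Real.exp (l * ∑ j : Fin (n - t), (w j - μ₀)))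
          (fun j : Fin (n - t) => X (0 + t + (j : ℕ)) ω) := by
    funext ω
    simp only [zero_add]
    congr 1
    congr 1
    rw [Fin.sum_univ_eq_sum_range (fun j => X (t + j) ω - μ₀) (n - t)]
    exact Finset.sum_Ico_eq_sum_range (f := fun i => X i ω - μ₀) (m := t) (n := n)
  have hindFG : ProbabilityTheory.IndepFun
      ((chSet μ₀ x X t).indicator
        (fun ω' => Real.exp (l * ∑ i ∈ Finset.range t, (X i ω' - μ₀))))
      (fun ω => Real.exp (l * ∑ i ∈ Finset.Ico t n, (X i ω - μ₀))) P := by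
    rw [hF_eq, hG_eq]
    exact aux_block_indep hXmeas hindep 0 t (n - t) _ _ hφmeas hψmeas
  have hGint : Integrable (fun ω => Real.exp (l * ∑ i ∈ Finset.Ico t n, (X i ω - μ₀))) P :=
    aux_int_exp P μ₀ hμ0 hμ1 X hXmeas hX01 l (Finset.Ico t n)
  have hGval : ∫ ω, Real.exp (l * ∑ i ∈ Finset.Ico t n, (X i ω - μ₀)) ∂P = m ^ (n - t) := by
    have h := aux_mgf P μ₀ hμ0 hμ1 X hXmeas hX01 hXmean hindep l t (n - t)
    rwa [Nat.add_sub_cancel' htn] at h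
  have hm1 : 1 ≤ m := aux_one_le_m μ₀ hμ0 hμ1 l hl0
  have hFnonneg : 0 ≤ ∫ ω, (chSet μ₀ x X t).indicator
      (fun ω' => Real.exp (l * ∑ i ∈ Finset.range t, (X i ω' - μ₀))) ω ∂P := by
    apply integral_nonneg
    intro ω
    exact Set.indicator_nonneg (fun ω' _ => (Real.exp_pos _).le) ω
  have hmul := hindFG.integral_mul_eq_mul_integral hFint.aestronglyMeasurable hGint.aestronglyMeasurable
  have hprod_eq : (((chSet μ₀ x X t).indicator
      (fun ω' => Real.exp (l * ∑ i ∈ Finset.range t, (X i ω' - μ₀))))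
      * fun ω => Real.exp (l * ∑ i ∈ Finset.Ico t n, (X i ω - μ₀)))
      = (chSet μ₀ x X t).indicator
        (fun ω' => Real.exp (l * ∑ i ∈ Finset.range n, (X i ω' - μ₀))) := by
    funext ω
    rw [Pi.mul_apply]
    by_cases h : ω ∈ chSet μ₀ x X t
    · rw [Set.indicator_of_mem h, Set.indicator_of_mem h, ← Real.exp_add, ← mul_add]
      congr 2
      rw [Finset.range_eq_Ico, Finset.range_eq_Ico]
      exact Finset.sum_Ico_consecutive (fun i => X i ω - μ₀) (Nat.zero_le t) htn
    · rw [Set.indicator_of_notMem h, Set.indicator_of_notMem h, zero_mul]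
  calc Real.exp (l * x) * (P (chSet μ₀ x X t)).toReal
      ≤ ∫ ω, (chSet μ₀ x X t).indicator
          (fun ω' => Real.exp (l * ∑ i ∈ Finset.range t, (X i ω' - μ₀))) ω ∂P := step1
  _ ≤ (∫ ω, (chSet μ₀ x X t).indicator
          (fun ω' => Real.exp (l * ∑ i ∈ Finset.range t, (X i ω' - μ₀))) ω ∂P) * m ^ (n - t) := by
      nth_rewrite 1 [← mul_one (∫ ω, (chSet μ₀ x X t).indicator
          (fun ω' => Real.exp (l * ∑ i ∈ Finset.range t, (X i ω' - μ₀))) ω ∂P)]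
      exact mul_le_mul_of_nonneg_left (one_le_pow₀ hm1) hFnonneg
  _ = ∫ ω, (chSet μ₀ x X t).indicator
        (fun ω' => Real.exp (l * ∑ i ∈ Finset.range n, (X i ω' - μ₀))) ω ∂P := by
      rw [← hGval, ← hmul, hprod_eq]
end
lemma aux_numeric (μ₀ x N l : ℝ) (hμ0 : 0 < μ₀) (hN : 0 < N) (hx0 : 0 ≤ x)
    (hl : l = 2 * x / (3 * (N * μ₀))) (hl23 : l ≤ 2/3) (hl0 : 0 ≤ l) :
    N * (μ₀ * (Real.exp l - 1) - l * μ₀) - l * x ≤ -x ^ 2 / (3 * μ₀ * N) := by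
  have hA : (0:ℝ) < N * μ₀ := mul_pos hN hμ0
  have hx_eq : x = (3/2) * (l * (N * μ₀)) := by
    rw [hl]; field_simp
  have hexp3 : Real.exp l ≤ 1 + l + l^2/2 + (2/9) * l^3 := by
    have h := Real.exp_bound' hl0 (by linarith) (n := 3) (by norm_num)
    norm_num [Finset.sum_range_succ, Nat.factorial] at h
    linarith [h]
  have step : N * (μ₀ * (Real.exp l - 1) - l * μ₀) ≤ (N * μ₀) * (l^2/2 + (2/9) * l^3) := by
    nlinarith [mul_le_mul_of_nonneg_left hexp3 hA.le]
  have h3 : (0:ℝ) < 3 * μ₀ * N := by positivity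
  rw [le_div_iff₀ h3]
  have h4 : (N * (μ₀ * (Real.exp l - 1) - l * μ₀) - l * x) * (3 * μ₀ * N)
      ≤ ((N * μ₀) * (l^2/2 + (2/9) * l^3) - l * x) * (3 * μ₀ * N) :=
    mul_le_mul_of_nonneg_right (by linarith) h3.le
  refine h4.trans ?_
  rw [hx_eq]
  nlinarith [mul_nonneg (mul_nonneg (sq_nonneg (N * μ₀)) (sq_nonneg l))
    (by linarith : (0:ℝ) ≤ 9/8 - l)]

/-- Chernoff-type maximal inequality: for i.i.d. Bernoulli(μ₀) random
variables `X₁, X₂, …`, with `Sₜ = ∑_{i=1}^t (Xᵢ - μ₀)`, for every `n ≥ 1` and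
every `0 ≤ x ≤ n·μ₀`, `P(∃ t ∈ {1,…,n}, Sₜ ≥ x) ≤ exp(-x²/(3·μ₀·n))`. -/
theorem chernoff_maximal_inequality
    {Ω : Type*} [MeasurableSpace Ω] (P : Measure Ω) [IsProbabilityMeasure P]
    (μ₀ : ℝ) (hμ0 : 0 < μ₀) (hμ1 : μ₀ ≤ 1)
    (X : ℕ → Ω → ℝ) (hXmeas : ∀ i, Measurable (X i))
    (hX01 : ∀ i ω, X i ω = 0 ∨ X i ω = 1)
    (hXmean : ∀ i, P {ω | X i ω = 1} = ENNReal.ofReal μ₀)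
    (hindep : ProbabilityTheory.iIndepFun X P)
    (n : ℕ) (hn : 1 ≤ n) (x : ℝ) (hx0 : 0 ≤ x) (hxn : x ≤ n * μ₀) :
    P {ω | ∃ t : ℕ, 1 ≤ t ∧ t ≤ n ∧
        x ≤ ∑ i ∈ range t, (X i ω - μ₀)} ≤
      ENNReal.ofReal (Real.exp (-x ^ 2 / (3 * μ₀ * n))) := by
  classical
  have hN : (0:ℝ) < (n : ℝ) := by exact_mod_cast Nat.lt_of_lt_of_le Nat.zero_lt_one hn
  have hA : (0:ℝ) < (n : ℝ) * μ₀ := mul_pos hN hμ0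
  set l : ℝ := 2 * x / (3 * ((n : ℝ) * μ₀)) with hl
  have hl0 : 0 ≤ l := by
    apply div_nonneg (by linarith) (by linarith)
  have hl23 : l ≤ 2/3 := by
    rw [hl, div_le_iff₀ (by linarith)]
    linarith
  set m : ℝ := Real.exp (-(l * μ₀)) * (1 + μ₀ * (Real.exp l - 1)) with hm
  set E : Set Ω := {ω | ∃ t : ℕ, 1 ≤ t ∧ t ≤ n ∧
    x ≤ ∑ i ∈ range t, (X i ω - μ₀)} with hE
  -- covering by first-passage events
  have hcover : E ⊆ ⋃ t ∈ Finset.Icc 1 n, chSet μ₀ x X t := by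
    rintro ω ⟨t, ht1, htn, hxt⟩
    have hex : ∃ s, 1 ≤ s ∧ x ≤ ∑ i ∈ range s, (X i ω - μ₀) := ⟨t, ht1, hxt⟩
    have hspec := Nat.find_spec hex
    have ht₀t : Nat.find hex ≤ t := Nat.find_min' hex ⟨ht1, hxt⟩
    simp only [Set.mem_iUnion, Finset.mem_Icc]
    refine ⟨Nat.find hex, ⟨hspec.1, le_trans ht₀t htn⟩, hspec.2, fun s hs1 hst => ?_⟩
    by_contra hcon
    push_neg at hcon
    exact Nat.find_min hex hst ⟨hs1, hcon⟩
  have hPle : P E ≤ ∑ t ∈ Finset.Icc 1 n, P (chSet μ₀ x X t) :=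
    (measure_mono hcover).trans (measure_biUnion_finset_le _ _)
  have h1 : (P E).toReal ≤ ∑ t ∈ Finset.Icc 1 n, (P (chSet μ₀ x X t)).toReal := by
    rw [← ENNReal.toReal_sum (fun t _ => measure_ne_top P _)]
    exact ENNReal.toReal_mono (ENNReal.sum_ne_top.2 fun t _ => measure_ne_top P _) hPle
  -- per-t bound
  have hkey : ∀ t ∈ Finset.Icc 1 n, Real.exp (l * x) * (P (chSet μ₀ x X t)).toReal ≤
      ∫ ω, (chSet μ₀ x X t).indicator
        (fun ω' => Real.exp (l * ∑ i ∈ range n, (X i ω' - μ₀))) ω ∂P :=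
    fun t ht => aux_key P μ₀ hμ0 hμ1 X hXmeas hX01 hXmean hindep x l hl0 t n
      (Finset.mem_Icc.1 ht).2
  have hFn_int : ∀ t : ℕ, Integrable ((chSet μ₀ x X t).indicator
      (fun ω' => Real.exp (l * ∑ i ∈ range n, (X i ω' - μ₀)))) P :=
    fun t => aux_indic_int P μ₀ hμ0 hμ1 X hXmeas hX01 x l t n
  -- sum of indicators bounded by the full mgf integrand
  have hsum_le : ∑ t ∈ Finset.Icc 1 n, ∫ ω, (chSet μ₀ x X t).indicator
        (fun ω' => Real.exp (l * ∑ i ∈ range n, (X i ω' - μ₀))) ω ∂P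
      ≤ ∫ ω, Real.exp (l * ∑ i ∈ range n, (X i ω - μ₀)) ∂P := by
    rw [← integral_finset_sum _ (fun t _ => hFn_int t)]
    apply integral_mono (integrable_finset_sum _ (fun t _ => hFn_int t))
      (aux_int_exp P μ₀ hμ0 hμ1 X hXmeas hX01 l (range n))
    intro ω
    show ∑ t ∈ Finset.Icc 1 n, (chSet μ₀ x X t).indicator
        (fun ω' => Real.exp (l * ∑ i ∈ range n, (X i ω' - μ₀))) ω
      ≤ Real.exp (l * ∑ i ∈ range n, (X i ω - μ₀))
    by_cases hex : ∃ t₀ ∈ Finset.Icc 1 n, ω ∈ chSet μ₀ x X t₀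
    · obtain ⟨t₀, ht₀, hmem⟩ := hex
      have hsingle : ∑ t ∈ Finset.Icc 1 n, (chSet μ₀ x X t).indicator
          (fun ω' => Real.exp (l * ∑ i ∈ range n, (X i ω' - μ₀))) ω
          = (chSet μ₀ x X t₀).indicator
            (fun ω' => Real.exp (l * ∑ i ∈ range n, (X i ω' - μ₀))) ω := by
        refine Finset.sum_eq_single t₀ (fun b hb hne => ?_) (fun h => absurd ht₀ h)
        refine Set.indicator_of_notMem (fun hmb => hne ?_) _
        exact chSet_disj (μ₀ := μ₀) (x := x) (X := X) hmb hmem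
          (Finset.mem_Icc.1 hb).1 (Finset.mem_Icc.1 ht₀).1
      rw [hsingle, Set.indicator_of_mem hmem]
    · push_neg at hex
      have hz : ∑ t ∈ Finset.Icc 1 n, (chSet μ₀ x X t).indicator
          (fun ω' => Real.exp (l * ∑ i ∈ range n, (X i ω' - μ₀))) ω = 0 :=
        Finset.sum_eq_zero fun t ht => Set.indicator_of_notMem (hex t ht) _
      rw [hz]
      exact (Real.exp_pos _).le
  have hmgf : ∫ ω, Real.exp (l * ∑ i ∈ range n, (X i ω - μ₀)) ∂P = m ^ n := by
    have h := aux_mgf P μ₀ hμ0 hμ1 X hXmeas hX01 hXmean hindep l 0 n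
    rw [zero_add] at h
    rw [Finset.range_eq_Ico]
    exact h
  have hchain : Real.exp (l * x) * (P E).toReal ≤ m ^ n := by
    calc Real.exp (l * x) * (P E).toReal
        ≤ Real.exp (l * x) * ∑ t ∈ Finset.Icc 1 n, (P (chSet μ₀ x X t)).toReal :=
          mul_le_mul_of_nonneg_left h1 (Real.exp_pos _).le
    _ = ∑ t ∈ Finset.Icc 1 n, Real.exp (l * x) * (P (chSet μ₀ x X t)).toReal :=
          Finset.mul_sum _ _ _
    _ ≤ ∑ t ∈ Finset.Icc 1 n, ∫ ω, (chSet μ₀ x X t).indicator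
          (fun ω' => Real.exp (l * ∑ i ∈ range n, (X i ω' - μ₀))) ω ∂P :=
          Finset.sum_le_sum hkey
    _ ≤ ∫ ω, Real.exp (l * ∑ i ∈ range n, (X i ω - μ₀)) ∂P := hsum_le
    _ = m ^ n := hmgf
  have hm1 : 1 ≤ m := aux_one_le_m μ₀ hμ0 hμ1 l hl0
  have hmn : m ^ n ≤ Real.exp ((n : ℝ) * (μ₀ * (Real.exp l - 1) - l * μ₀)) := by
    calc m ^ n ≤ (Real.exp (μ₀ * (Real.exp l - 1) - l * μ₀)) ^ n :=
          pow_le_pow_left₀ (by linarith) (aux_m_le_exp μ₀ l hμ0.le hl0) n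
    _ = Real.exp ((n : ℝ) * (μ₀ * (Real.exp l - 1) - l * μ₀)) :=
          (Real.exp_nat_mul _ n).symm
  have hfinal : (P E).toReal ≤ Real.exp (-x ^ 2 / (3 * μ₀ * n)) := by
    have h2 : (P E).toReal ≤ Real.exp (-(l * x)) * m ^ n := by
      have h := mul_le_mul_of_nonneg_left hchain (Real.exp_pos (-(l * x))).le
      rwa [← mul_assoc, ← Real.exp_add, show -(l * x) + l * x = 0 by ring,
        Real.exp_zero, one_mul] at h
    have hnum := aux_numeric μ₀ x (n : ℝ) l hμ0 hN hx0 hl hl23 hl0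
    calc (P E).toReal ≤ Real.exp (-(l * x)) * m ^ n := h2
    _ ≤ Real.exp (-(l * x)) * Real.exp ((n : ℝ) * (μ₀ * (Real.exp l - 1) - l * μ₀)) :=
        mul_le_mul_of_nonneg_left hmn (Real.exp_pos _).le
    _ = Real.exp ((n : ℝ) * (μ₀ * (Real.exp l - 1) - l * μ₀) - l * x) := by
        rw [← Real.exp_add]; ring_nf
    _ ≤ Real.exp (-x ^ 2 / (3 * μ₀ * n)) := Real.exp_le_exp.2 hnum
  calc P E = ENNReal.ofReal (P E).toReal := (ENNReal.ofReal_toReal (measure_ne_top P _)).symm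
  _ ≤ ENNReal.ofReal (Real.exp (-x ^ 2 / (3 * μ₀ * n))) := ENNReal.ofReal_le_ofReal hfinal
end

section
/- For every real N ≥ 1 there exists a constant C > 0, depending only on N, such that the following holds: for all reals Q ≥ 2 and K ≥ 2, every integer n ≥ 2 with 3n ≤ QK, and every δ ∈ (0,1), any real T ≥ 64Q satisfying T = N·Q·ln(3nT²/δ) + 64·Q·ln(K·ln(2T)/δ) must satisfy T ≤ C·Q·ln(QK/δ). -/
set_option maxHeartbeats 1600000 in
/-- Lemma (sample-complexity format transfer for CCPE-BGLM, Lemma 8 of the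
paper): if `T = N·Q·ln(3nT²/δ) + 64·Q·ln(K·ln(2T)/δ)` with `T ≥ 64Q`, then
`T = O(Q·ln(QK/δ))`, with the constant depending only on `N`. -/
theorem sample_complexity_transfer_BGLM :
    ∀ N : ℝ, 1 ≤ N → ∃ C : ℝ, 0 < C ∧
      ∀ Q K : ℝ, 2 ≤ Q → 2 ≤ K → ∀ n : ℕ, 2 ≤ n → 3 * (n : ℝ) ≤ Q * K →
        ∀ δ : ℝ, 0 < δ → δ < 1 → ∀ T : ℝ, 64 * Q ≤ T →
          T = N * Q * Real.log (3 * n * T ^ 2 / δ) +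
              64 * Q * Real.log (K * Real.log (2 * T) / δ) →
          T ≤ C * Q * Real.log (Q * K / δ) := by
  intro N hN
  have hlogc : (0:ℝ) < Real.log (8*N+256) := Real.log_pos (by nlinarith)
  refine ⟨2*(N+64) + 2*(2*N+64)*(Real.log (8*N+256) + 1), by nlinarith, ?_⟩
  intro Q K hQ hK n hn hnQK δ hδ0 hδ1 T hT hEq
  obtain ⟨L, hLdef⟩ : ∃ L : ℝ, L = Real.log (Q*K/δ) := ⟨_, rfl⟩
  rw [← hLdef]
  have hQ0 : (0:ℝ) < Q := by linarith
  have hK0 : (0:ℝ) < K := by linarith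
  have hT0 : (128:ℝ) ≤ T := by nlinarith
  have hT1 : (1:ℝ) < 2*T := by linarith
  have hlog2T : 0 < Real.log (2*T) := Real.log_pos hT1
  have hQKδ : (0:ℝ) < Q*K/δ := by positivity
  -- general lemma : log x ≤ x/c + log c - 1
  have key : ∀ x c : ℝ, 0 < x → 0 < c → Real.log x ≤ x/c + Real.log c - 1 := by
    intro x c hx hc
    have h := Real.log_le_sub_one_of_pos (div_pos hx hc)
    rw [Real.log_div hx.ne' hc.ne'] at h
    linarith
  have hL1 : 1 ≤ L := by
    have h3 : (3:ℝ) ≤ Q*K/δ := by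
      rw [le_div_iff₀ hδ0]; nlinarith
    have hexp : Real.exp 1 ≤ 3 := by
      calc Real.exp 1 ≤ 2.7182818286 := Real.exp_one_lt_d9.le
        _ ≤ 3 := by norm_num
    have : (1:ℝ) ≤ Real.log 3 := by
      rw [Real.le_log_iff_exp_le (by norm_num)]; exact hexp
    have h2 : Real.log 3 ≤ L := by
      rw [hLdef]; exact Real.log_le_log (by norm_num) h3
    linarith
  have hlogQ : Real.log Q ≤ L := by
    have : Q ≤ Q*K/δ := by
      rw [le_div_iff₀ hδ0]; nlinarith
    rw [hLdef]; exact Real.log_le_log hQ0 this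
  -- bound the first log
  have h1 : Real.log (3 * n * T ^ 2 / δ) ≤ L + 2 * Real.log (2*T) := by
    have hle : 3 * (n:ℝ) * T ^ 2 / δ ≤ (Q*K/δ) * (2*T)^2 := by
      rw [div_le_iff₀ hδ0]
      have : (Q*K/δ) * δ = Q*K := by field_simp
      nlinarith [sq_nonneg T]
    have hpos : (0:ℝ) < 3 * (n:ℝ) * T ^ 2 / δ := by
      have : (0:ℝ) < (n:ℝ) := by exact_mod_cast Nat.pos_of_ne_zero (by omega)
      positivity
    calc Real.log (3 * n * T ^ 2 / δ) ≤ Real.log ((Q*K/δ) * (2*T)^2) :=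
          Real.log_le_log hpos hle
      _ = L + 2 * Real.log (2*T) := by
          rw [hLdef, Real.log_mul hQKδ.ne' (by positivity), Real.log_pow]
          push_cast; ring
  -- bound the second log
  have h2 : Real.log (K * Real.log (2*T) / δ) ≤ L + Real.log (2*T) := by
    have hle : K * Real.log (2*T) / δ ≤ (Q*K/δ) * Real.log (2*T) := by
      rw [div_le_iff₀ hδ0]
      have hmul : (Q*K/δ) * Real.log (2*T) * δ = Q*K*Real.log (2*T) := by
        field_simp
      rw [hmul]
      nlinarith [mul_nonneg (mul_nonneg (by linarith : (0:ℝ) ≤ Q-1) hK0.le) hlog2T.le]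
    have hpos : (0:ℝ) < K * Real.log (2*T) / δ := by positivity
    calc Real.log (K * Real.log (2*T) / δ) ≤ Real.log ((Q*K/δ) * Real.log (2*T)) :=
          Real.log_le_log hpos hle
      _ = L + Real.log (Real.log (2*T)) := by
          rw [hLdef, Real.log_mul hQKδ.ne' hlog2T.ne']
      _ ≤ L + Real.log (2*T) := by
          have := Real.log_le_sub_one_of_pos hlog2T
          linarith
  -- main bound: T ≤ (N+64) Q L + (2N+64) Q log(2T)
  have hmain : T ≤ (N+64)*Q*L + (2*N+64)*Q*Real.log (2*T) := by
    have hNQ : (0:ℝ) ≤ N*Q := by positivity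
    have h64Q : (0:ℝ) ≤ 64*Q := by positivity
    nlinarith [mul_le_mul_of_nonneg_left h1 hNQ, mul_le_mul_of_nonneg_left h2 h64Q]
  -- absorb log(2T)
  obtain ⟨b, hbdef⟩ : ∃ b : ℝ, b = (2*N+64)*Q := ⟨_, rfl⟩
  have hb0 : (0:ℝ) < b := by rw [hbdef]; positivity
  have habs : Real.log (2*T) ≤ 2*T/(4*b) + Real.log (4*b) - 1 :=
    key (2*T) (4*b) (by linarith) (by linarith)
  have hb4 : Real.log (4*b) = Real.log (8*N+256) + Real.log Q := by
    have : (4:ℝ)*b = (8*N+256)*Q := by rw [hbdef]; ring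
    rw [this, Real.log_mul (by nlinarith) hQ0.ne']
  have hstep : b * Real.log (2*T) ≤ T/2 + b * Real.log (4*b) := by
    have hm := mul_le_mul_of_nonneg_left habs hb0.le
    have heq : b * (2*T/(4*b) + Real.log (4*b) - 1) = T/2 + b*Real.log (4*b) - b := by
      field_simp
      ring
    rw [heq] at hm
    linarith
  have hlog4b : Real.log (4*b) ≤ (Real.log (8*N+256) + 1) * L := by
    rw [hb4]
    nlinarith
  have hmain' : T ≤ (N+64)*Q*L + b*Real.log (2*T) := by rw [hbdef]; exact hmain
  have hfin : T ≤ 2*(N+64)*Q*L + 2*b*((Real.log (8*N+256) + 1) * L) := by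
    nlinarith [mul_le_mul_of_nonneg_left hlog4b hb0.le, hmain', hstep]
  rw [hbdef] at hfin
  calc T ≤ 2*(N+64)*Q*L + 2*((2*N+64)*Q)*((Real.log (8*N+256) + 1) * L) := hfin
    _ = (2*(N+64) + 2*(2*N+64)*(Real.log (8*N+256) + 1)) * Q * L := by ring
end

section
/- Let Z be a nonempty finite index set, let c > 0, and let a, b : Z → ℝ be such that a_z ≥ c/4 for all z ∈ Z and |b_z − a_z| ≤ √(c·a_z) for all z ∈ Z. Then |min_{z∈Z} b_z − min_{z∈Z} a_z| ≤ √(c·min_{z∈Z} a_z). -/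
open Finset

lemma sqrt_mono_aux (c x y : ℝ) (hc : 0 < c) (hx : c / 4 ≤ x) (hxy : x ≤ y) :
    x - Real.sqrt (c * x) ≤ y - Real.sqrt (c * y) := by
  have hx0 : 0 ≤ x := le_trans (by linarith) hx
  have hcx : 0 ≤ c * x := by positivity
  have hcy : 0 ≤ c * y := mul_nonneg hc.le (hx0.trans hxy)
  set s := Real.sqrt (c * x) with hs
  set t := Real.sqrt (c * y) with ht
  have hs2 : s ^ 2 = c * x := Real.sq_sqrt hcx
  have ht2 : t ^ 2 = c * y := Real.sq_sqrt hcy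
  have hst : s ≤ t := Real.sqrt_le_sqrt (by nlinarith)
  have hsl : c / 2 ≤ s := by
    have : Real.sqrt ((c/2)^2) ≤ s := Real.sqrt_le_sqrt (by nlinarith)
    rwa [Real.sqrt_sq (by positivity)] at this
  nlinarith [Real.sqrt_nonneg (c * x), Real.sqrt_nonneg (c * y)]

/-- Stability of the minimum under square-root perturbations: if
`a z ≥ c/4` for all `z` and `|b z - a z| ≤ √(c·a z)` for all `z`, then
`|min b - min a| ≤ √(c · min a)`. -/
theorem abs_min_sub_min_le
    {Z : Type*} [Fintype Z] [Nonempty Z]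
    (c : ℝ) (hc : 0 < c) (a b : Z → ℝ)
    (ha : ∀ z, c / 4 ≤ a z)
    (hab : ∀ z, |b z - a z| ≤ Real.sqrt (c * a z)) :
    |univ.inf' univ_nonempty b - univ.inf' univ_nonempty a| ≤
      Real.sqrt (c * univ.inf' univ_nonempty a) := by
  set m := univ.inf' univ_nonempty a with hm
  obtain ⟨z0, _, hz0⟩ := Finset.exists_mem_eq_inf' (univ_nonempty) a
  have hz0' : a z0 = m := hz0.symm
  have hm4 : c / 4 ≤ m := hz0' ▸ ha z0
  rw [abs_sub_le_iff]
  constructor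
  · -- min b - m ≤ √(c m)
    have h1 : univ.inf' univ_nonempty b ≤ b z0 := inf'_le _ (mem_univ z0)
    have h2 : b z0 ≤ a z0 + Real.sqrt (c * a z0) := by
      have := abs_le.mp (hab z0); linarith [this.2]
    rw [hz0'] at h2
    linarith
  · -- m - min b ≤ √(c m)
    obtain ⟨z1, _, hz1⟩ := Finset.exists_mem_eq_inf' (univ_nonempty) b
    have h3 : a z1 - Real.sqrt (c * a z1) ≤ b z1 := by
      have := abs_le.mp (hab z1); linarith [this.1]
    have h4 : m ≤ a z1 := hm ▸ inf'_le _ (mem_univ z1)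
    have h5 := sqrt_mono_aux c m (a z1) hc hm4 h4
    rw [← hz1] at h3
    linarith
end

section
/- Let H be a real symmetric positive definite d×d matrix and E a real symmetric d×d matrix such that ‖H^{−1/2} E H^{−1/2}‖ < 1, where H^{1/2} is the positive definite square root of H and H^{−1/2} its inverse. Then H + E is invertible and ‖H^{−1/2} E (H+E)^{−1} H^{1/2}‖ ≤ ‖H^{−1/2} E H^{−1/2}‖ / (1 − ‖H^{−1/2} E H^{−1/2}‖). -/
open scoped Matrix.Norms.L2Operator

section

open scoped ComplexOrder

/-- The positive semidefinite square root of a positive semidefinite matrix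
(the definition Mathlib had under this name, since removed). -/
noncomputable def Matrix.PosSemidef.sqrt {n : Type*} [Fintype n] [DecidableEq n] {𝕜 : Type*}
    [RCLike 𝕜] {A : Matrix n n 𝕜} (hA : A.PosSemidef) : Matrix n n 𝕜 :=
  hA.1.eigenvectorUnitary.1 * Matrix.diagonal ((↑) ∘ (√·) ∘ hA.1.eigenvalues) *
    (star hA.1.eigenvectorUnitary : Matrix n n 𝕜)

theorem Matrix.PosSemidef.sqrt_mul_self {n : Type*} [Fintype n] [DecidableEq n] {𝕜 : Type*}
    [RCLike 𝕜] {A : Matrix n n 𝕜} (hA : A.PosSemidef) : hA.sqrt * hA.sqrt = A := by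
  unfold Matrix.PosSemidef.sqrt
  conv_rhs => rw [hA.1.spectral_theorem, Unitary.conjStarAlgAut_apply]
  have hU : (star hA.1.eigenvectorUnitary : Matrix n n 𝕜) * hA.1.eigenvectorUnitary.1 = 1 :=
    Unitary.coe_star_mul_self _
  have hD : Matrix.diagonal (((↑) : ℝ → 𝕜) ∘ (√·) ∘ hA.1.eigenvalues) *
      Matrix.diagonal (((↑) : ℝ → 𝕜) ∘ (√·) ∘ hA.1.eigenvalues) =
      Matrix.diagonal (RCLike.ofReal ∘ hA.1.eigenvalues) := by
    rw [Matrix.diagonal_mul_diagonal]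
    congr 1
    funext i
    simp only [Function.comp_apply]
    rw [← RCLike.ofReal_mul, Real.mul_self_sqrt (hA.eigenvalues_nonneg i)]
  calc _ = hA.1.eigenvectorUnitary.1 * Matrix.diagonal (((↑) : ℝ → 𝕜) ∘ (√·) ∘ hA.1.eigenvalues) *
      ((star hA.1.eigenvectorUnitary : Matrix n n 𝕜) * hA.1.eigenvectorUnitary.1) *
      Matrix.diagonal (((↑) : ℝ → 𝕜) ∘ (√·) ∘ hA.1.eigenvalues) *
      (star hA.1.eigenvectorUnitary : Matrix n n 𝕜) := by simp only [mul_assoc]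
    _ = _ := by rw [hU, mul_one, mul_assoc _ (Matrix.diagonal _) (Matrix.diagonal _), hD]
end

/-- If `H` is symmetric positive definite, `E` is symmetric, and
`‖H^{-1/2} E H^{-1/2}‖ < 1` in the ℓ₂ operator norm, then `H + E` is
invertible and
`‖H^{-1/2} E (H+E)^{-1} H^{1/2}‖ ≤ ‖H^{-1/2} E H^{-1/2}‖ / (1 - ‖H^{-1/2} E H^{-1/2}‖)`. -/
theorem opNorm_sqrtinv_mul_inv_mul_sqrt_le
    (d : ℕ) (H E : Matrix (Fin d) (Fin d) ℝ)
    (hH : H.PosDef) (hE : E.IsHermitian)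
    (h : ‖hH.posSemidef.sqrt⁻¹ * E * hH.posSemidef.sqrt⁻¹‖ < 1) :
    IsUnit (H + E) ∧
      ‖hH.posSemidef.sqrt⁻¹ * E * (H + E)⁻¹ * hH.posSemidef.sqrt‖ ≤
        ‖hH.posSemidef.sqrt⁻¹ * E * hH.posSemidef.sqrt⁻¹‖ /
          (1 - ‖hH.posSemidef.sqrt⁻¹ * E * hH.posSemidef.sqrt⁻¹‖) := by
  set S := hH.posSemidef.sqrt with hSdef
  set M := S⁻¹ * E * S⁻¹ with hMdef
  -- S is invertible
  have hSdet : IsUnit S.det := by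
    have h2 : S.det * S.det = H.det := by
      rw [← Matrix.det_mul, hH.posSemidef.sqrt_mul_self]
    have h3 := hH.det_pos
    exact isUnit_iff_ne_zero.2 (fun h0 => by rw [h0, mul_zero] at h2; nlinarith)
  have hSunit : IsUnit S := (Matrix.isUnit_iff_isUnit_det S).2 hSdet
  have hSS : S * S⁻¹ = 1 := Matrix.mul_nonsing_inv S hSdet
  have hSS' : S⁻¹ * S = 1 := Matrix.nonsing_inv_mul S hSdet
  -- the unit 1 + M
  have hM' : ‖(-M : Matrix (Fin d) (Fin d) ℝ)‖ < 1 := by simpa using h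
  let u : (Matrix (Fin d) (Fin d) ℝ)ˣ := Units.oneSub (-M) hM'
  have hu : (u : Matrix (Fin d) (Fin d) ℝ) = 1 + M := by
    simp [u, Units.oneSub, sub_neg_eq_add]
  -- H + E = S * (1 + M) * S
  have key : H + E = S * (1 + M) * S := by
    have h4 : S * (1 + M) * S = S * S + S * M * S := by
      rw [Matrix.mul_add, Matrix.mul_one, Matrix.add_mul]
    rw [h4, hH.posSemidef.sqrt_mul_self, hMdef]
    congr 1
    have : S * (S⁻¹ * E * S⁻¹) * S = (S * S⁻¹) * E * (S⁻¹ * S) := by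
      simp only [Matrix.mul_assoc]
    rw [this, hSS, hSS', Matrix.one_mul, Matrix.mul_one]
  have hUnit : IsUnit (H + E) := by
    rw [key, ← hu]
    exact (hSunit.mul u.isUnit).mul hSunit
  refine ⟨hUnit, ?_⟩
  -- identify the inverse of 1 + M with the inverse of the unit u
  have huinv : (1 + M)⁻¹ = ((u⁻¹ : (Matrix (Fin d) (Fin d) ℝ)ˣ) : Matrix (Fin d) (Fin d) ℝ) := by
    rw [Matrix.coe_units_inv, hu]
  set v : Matrix (Fin d) (Fin d) ℝ := ((u⁻¹ : (Matrix (Fin d) (Fin d) ℝ)ˣ) : Matrix (Fin d) (Fin d) ℝ) with hvdef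
  -- (H+E)⁻¹ = S⁻¹ * v * S⁻¹
  have hinv : (H + E)⁻¹ = S⁻¹ * v * S⁻¹ := by
    rw [key, Matrix.mul_inv_rev, Matrix.mul_inv_rev, huinv, Matrix.mul_assoc]
  -- the target matrix equals M * v
  have htarget : S⁻¹ * E * (H + E)⁻¹ * S = M * v := by
    rw [hinv, hMdef]
    have : S⁻¹ * E * (S⁻¹ * v * S⁻¹) * S = (S⁻¹ * E * S⁻¹) * v * (S⁻¹ * S) := by
      simp only [Matrix.mul_assoc]
    rw [this, hSS', Matrix.mul_one]
  -- norm of 1 is at most 1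
  have hone : ‖(1 : Matrix (Fin d) (Fin d) ℝ)‖ ≤ 1 := by
    rcases Nat.eq_zero_or_pos d with hd | hd
    · subst hd
      have : (1 : Matrix (Fin 0) (Fin 0) ℝ) = 0 := Subsingleton.elim _ _
      rw [this, norm_zero]; norm_num
    · haveI : Nonempty (Fin d) := ⟨⟨0, hd⟩⟩
      haveI : Nontrivial (Matrix (Fin d) (Fin d) ℝ) := inferInstance
      rw [CStarRing.norm_one]
  -- v = 1 - M * v
  have hveq : v = 1 - M * v := by
    have h1 : (1 + M) * v = 1 := by
      rw [← hu, hvdef, ← Units.val_mul, mul_inv_cancel, Units.val_one]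
    have h2 : v + M * v = 1 := by rw [← h1, Matrix.add_mul, Matrix.one_mul]
    exact eq_sub_of_add_eq h2
  have hMnorm : (0:ℝ) ≤ ‖M‖ := norm_nonneg M
  have hlt : (0:ℝ) < 1 - ‖M‖ := by linarith
  -- bound on ‖v‖
  have hv : ‖v‖ ≤ (1 - ‖M‖)⁻¹ := by
    have h1 : ‖v‖ ≤ 1 + ‖M‖ * ‖v‖ := by
      calc ‖v‖ = ‖1 - M * v‖ := by rw [← hveq]
        _ ≤ ‖(1 : Matrix (Fin d) (Fin d) ℝ)‖ + ‖M * v‖ := norm_sub_le _ _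
        _ ≤ 1 + ‖M‖ * ‖v‖ := add_le_add hone (norm_mul_le M v)
    have h3 : ‖v‖ ≤ 1 / (1 - ‖M‖) := (le_div_iff₀ hlt).2 (by nlinarith)
    simpa [one_div] using h3
  rw [htarget, div_eq_mul_inv]
  calc ‖M * v‖ ≤ ‖M‖ * ‖v‖ := norm_mul_le M v
    _ ≤ ‖M‖ * (1 - ‖M‖)⁻¹ := mul_le_mul_of_nonneg_left hv hMnorm
end

section
/- Suppose |μ̂_a − μ_a| ≤ β_a for every a ∈ A, and suppose β_{a_h} ≤ max{Δ_{a_h}, ε/2}/4 and β_{a_l} ≤ max{Δ_{a_l}, ε/2}/4. Then μ̂_{a_l} + β_{a_l} ≤ μ̂_{a_h} − β_{a_h} + ε, i.e., the LUCB stopping condition U_{a_l} ≤ L_{a_h} + ε holds. -/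
open Finset

/-- LUCB stopping (part of Lemma 5 of the paper): if all confidence intervals
are valid and the radii of both candidate arms `a_h` (empirical best) and
`a_l` (highest UCB among the rest) are at most `max{Δ_a, ε/2}/4`, then the
stopping condition `U_{a_l} ≤ L_{a_h} + ε` holds. -/
theorem lucb_stopping_condition_holds
    {α : Type*} [Fintype α] [DecidableEq α] (hcard : 2 ≤ Fintype.card α)
    (μ μhat β : α → ℝ) (hβ0 : ∀ a, 0 ≤ β a)
    (ε : ℝ) (hε : 0 ≤ ε)
    (astar : α) (hastar : ∀ a, μ a ≤ μ astar)
    (hne : (univ.erase astar).Nonempty)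
    (Δ : α → ℝ)
    (hΔ : ∀ a, a ≠ astar → Δ a = μ astar - μ a)
    (hΔstar : Δ astar = μ astar - (univ.erase astar).sup' hne μ)
    (ah : α) (hah : ∀ a, μhat a ≤ μhat ah)
    (al : α) (halne : al ≠ ah)
    (hal : ∀ a, a ≠ ah → μhat a + β a ≤ μhat al + β al)
    (haccur : ∀ a, |μhat a - μ a| ≤ β a)
    (hβh : β ah ≤ max (Δ ah) (ε / 2) / 4)
    (hβl : β al ≤ max (Δ al) (ε / 2) / 4) :
    μhat al + β al ≤ μhat ah - β ah + ε := by
  have hacc : ∀ a, μhat a ≤ μ a + β a ∧ μ a - β a ≤ μhat a := by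
    intro a
    have h := abs_le.mp (haccur a)
    constructor <;> linarith [h.1, h.2]
  by_cases hh : ah = astar
  · -- Case 1 : ah = astar
    have hlne : al ≠ astar := hh ▸ halne
    have hΔl : Δ al = μ astar - μ al := hΔ al hlne
    have hmem : al ∈ univ.erase astar := mem_erase.mpr ⟨hlne, mem_univ al⟩
    have hsup : μ al ≤ (univ.erase astar).sup' hne μ := le_sup' μ hmem
    have hΔh : Δ ah ≤ Δ al := by rw [hh, hΔstar, hΔl]; linarith
    have hM : max (Δ ah) (ε / 2) ≤ max (Δ al) (ε / 2) :=
      max_le_max hΔh le_rfl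
    have hΔl0 : 0 ≤ Δ al := by rw [hΔl]; linarith [hastar al]
    have hMb : max (Δ al) (ε / 2) ≤ Δ al + ε / 2 :=
      max_le (by linarith) (by linarith)
    have h1 := (hacc al).1
    have h2 : μ astar - β ah ≤ μhat ah := by
      have := (hacc ah).2; rw [hh] at this ⊢; exact this
    linarith [hβh.trans (by linarith : max (Δ ah) (ε/2) / 4 ≤ max (Δ al) (ε/2) / 4)]
  · by_cases hl : al = astar
    · -- Case 3 : al = astar, ah ≠ astar
      have hΔh : Δ ah = μ astar - μ ah := hΔ ah hh
      have hmem : ah ∈ univ.erase astar := mem_erase.mpr ⟨hh, mem_univ ah⟩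
      have hsup : μ ah ≤ (univ.erase astar).sup' hne μ := le_sup' μ hmem
      have hΔlh : Δ al ≤ Δ ah := by rw [hl, hΔstar, hΔh]; linarith
      have hβl' : β al ≤ max (Δ ah) (ε / 2) / 4 := by
        have := max_le_max hΔlh (le_rfl : ε/2 ≤ ε/2)
        linarith
      have h1 : μ astar - β al ≤ μhat al := by
        have := (hacc al).2; rw [hl] at this ⊢; exact this
      have h2 := (hacc ah).1
      have h3 := hah al
      have hΔhb : Δ ah ≤ β al + β ah := by rw [hΔh]; linarith
      have hΔhε : Δ ah ≤ ε / 2 := by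
        rcases le_or_gt (Δ ah) (ε / 2) with h | h
        · exact h
        · exfalso
          rw [max_eq_left h.le] at hβh hβl'
          linarith
      rw [max_eq_right hΔhε] at hβh hβl'
      linarith
    · -- Case 2 : ah ≠ astar, al ≠ astar
      have hΔh : Δ ah = μ astar - μ ah := hΔ ah hh
      have hΔl : Δ al = μ astar - μ al := hΔ al hl
      have hstar1 := (hacc astar).2
      have hstar2 := hal astar (fun h => hh h.symm)
      have h1 := (hacc al).1
      have hΔlb : Δ al ≤ 2 * β al := by rw [hΔl]; linarith
      have hΔlε : Δ al ≤ ε / 2 := by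
        rcases le_or_gt (Δ al) (ε / 2) with h | h
        · exact h
        · exfalso
          rw [max_eq_left h.le] at hβl
          linarith
      have hβlε : β al ≤ ε / 8 := by
        rw [max_eq_right hΔlε] at hβl; linarith
      have h2 := (hacc al).2
      have h3 := hah al
      have h4 := (hacc ah).1
      -- μhat ah ≥ μ astar - 5ε/8 ; μhat ah ≤ μ astar - Δ ah + β ah
      have hΔhb : Δ ah ≤ 5 * ε / 8 + β ah := by rw [hΔh]; linarith
      have hβhε : β ah ≤ 5 * ε / 24 := by
        rcases le_or_gt (Δ ah) (ε / 2) with h | h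
        · rw [max_eq_right h] at hβh; linarith
        · rw [max_eq_left h.le] at hβh; linarith
      linarith
end

section
/- Suppose |μ̂_a − μ_a| ≤ β_a for every a ∈ A, and suppose the stopping condition μ̂_{a_l} + β_{a_l} ≤ μ̂_{a_h} − β_{a_h} + ε holds. Then the arm a_h is ε-optimal: μ_{a_h} ≥ max_{a ∈ A} μ_a − ε. -/
open Finset

/-- Correctness of the LUCB stopping rule: if all confidence intervals are
valid and the stopping condition `U_{a_l} ≤ L_{a_h} + ε` holds, then the
returned arm `a_h` is `ε`-optimal. -/
theorem lucb_output_eps_optimal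
    {α : Type*} [Fintype α] (hcard : 2 ≤ Fintype.card α)
    (μ μhat β : α → ℝ) (hβ0 : ∀ a, 0 ≤ β a)
    (ε : ℝ) (hε : 0 ≤ ε)
    (ah : α) (hah : ∀ a, μhat a ≤ μhat ah)
    (al : α) (halne : al ≠ ah)
    (hal : ∀ a, a ≠ ah → μhat a + β a ≤ μhat al + β al)
    (haccur : ∀ a, |μhat a - μ a| ≤ β a)
    (hstop : μhat al + β al ≤ μhat ah - β ah + ε) :
    ∀ a, μ a - ε ≤ μ ah := by
  intro a
  have h1 := abs_le.mp (haccur a)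
  have h2 := abs_le.mp (haccur ah)
  by_cases h : a = ah
  · subst h; linarith
  · have := hal a h
    linarith
end
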